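/- Let n, j ≥ 1 with gcd(j, 2n) = 2d and d < n, and define φ_j^(n)(k) = |D(jk, 2n)| with D(p, 2n) the representative of p mod 2n in [−n, n). Then for each m ∈ {1, …, (n−d)/(2d)}, the number of k ∈ {1, …, n−1} with φ_j^(n)(k) = 2dm equals 2d, and the image φ_j^(n)({1, …, n−1}) \ {0, n} equals {2dm : 1 ≤ m ≤ (n−d)/(2d)}. -/

import Mathlib

/-!
Write `j = 2d·a` and `n = d·b` with `gcd(a, b) = 1`. For `0 ≤ c < n`, `φ(k) = c` exactly when
`jk ≡ ±c (mod 2n)`; for `c = 2dm` this cancels to `ak ≡ ±m (mod b)`, i.e. to two residue classes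
of `k` mod `b`, distinct because `0 < 2m < b`. Each class meets `[0, n) = [0, d·b)` in `d` points,
none of them `k = 0`, giving `2d` solutions. Conversely `2d` divides `j` and `2n`, hence every
value of `φ`, and `0 ≤ φ ≤ n`.
-/

/-- `phi n j k = |D (j k, 2n)|`, where `D (p, 2n)` is the representative of
`p` mod `2n` lying in `[-n, n)`. -/
def phi (n j : ℕ) (k : ℤ) : ℤ := |((j : ℤ) * k + (n : ℤ)) % (2 * (n : ℤ)) - (n : ℤ)|

open Finset

lemma emod_add_sub_eq_iff_modEq {n x c : ℤ} (hc : -n ≤ c) (hcn : c < n) :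
    (x + n) % (2 * n) - n = c ↔ x ≡ c [ZMOD 2 * n] := by
  rw [sub_eq_iff_eq_add, ← Int.emod_eq_of_lt (by omega : 0 ≤ c + n) (by omega : c + n < 2 * n)]
  exact ⟨Int.ModEq.add_right_cancel' n, Int.ModEq.add_right n⟩

lemma card_filter_mul_modEq {a b : ℤ} (hab : IsCoprime a b) (hb : 0 < b) (d : ℕ) (c : ℤ) :
    #{k ∈ Ico 0 (d * b) | a * k ≡ c [ZMOD b]} = d := by
  obtain ⟨u, v, huv⟩ := hab
  have hsolve : ∀ k, a * k ≡ c [ZMOD b] ↔ k ≡ u * c [ZMOD b] := fun k => by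
    simp only [Int.modEq_iff_dvd]
    constructor
    · rintro ⟨w, hw⟩
      exact ⟨u * w - v * k, by linear_combination u * hw + k * huv⟩
    · rintro ⟨w, hw⟩
      exact ⟨a * w + v * c, by linear_combination a * hw - c * huv⟩
  rw [filter_congr fun k _ => hsolve k]
  have hcard := Int.Ico_filter_modEq_card 0 (d * b) hb (u * c)
  have hshift : ((d * b : ℤ) - (u * c : ℤ) : ℚ) / b = (0 - (u * c : ℤ) : ℚ) / b + (d : ℤ) := by
    field_simp
    push_cast
    ring
  rw [hshift, Int.ceil_add_intCast] at hcard
  push_cast at hcard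
  omega

lemma phi_zero (n j : ℕ) : phi n j 0 = 0 := by
  rcases Nat.eq_zero_or_pos n with rfl | hn
  · simp [phi]
  · simp [phi, Int.emod_eq_of_lt (by omega : (0 : ℤ) ≤ n) (by omega : (n : ℤ) < 2 * n)]

lemma phi_le {n : ℕ} (hn : 0 < n) (j : ℕ) (k : ℤ) : phi n j k ≤ n := by
  have h2n : (0 : ℤ) < 2 * n := by omega
  have := Int.emod_nonneg ((j : ℤ) * k + n) h2n.ne'
  have := Int.emod_lt_of_pos ((j : ℤ) * k + n) h2n
  exact abs_le.mpr ⟨by omega, by omega⟩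

lemma dvd_phi {n j : ℕ} {g : ℤ} (hj : g ∣ j) (hn : g ∣ 2 * n) (k : ℤ) : g ∣ phi n j k := by
  rw [phi, dvd_abs, Int.emod_def, show ∀ x y z : ℤ, x + y - z - y = x - z by intros; ring]
  exact dvd_sub (dvd_mul_of_dvd_left hj k) (dvd_mul_of_dvd_left hn _)

lemma phi_eq_iff_modEq {n j : ℕ} {k c : ℤ} (hc : 0 ≤ c) (hcn : c < n) :
    phi n j k = c ↔ j * k ≡ c [ZMOD 2 * n] ∨ j * k ≡ -c [ZMOD 2 * n] := by
  rw [phi, abs_eq hc, emod_add_sub_eq_iff_modEq (by omega) hcn,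
    emod_add_sub_eq_iff_modEq (by omega) (by omega)]

lemma le_sub_div_two_mul_iff {n d m : ℕ} (hdn : d ∣ n) (hm : 0 < m) :
    m ≤ (n - d) / (2 * d) ↔ 2 * d * m < n := by
  obtain ⟨b, rfl⟩ := hdn
  rcases Nat.eq_zero_or_pos d with rfl | hd
  · simp only [Nat.mul_zero, Nat.zero_mul, Nat.div_zero, Nat.lt_irrefl, iff_false]
    omega
  rw [Nat.le_div_iff_mul_le (by omega), ← Nat.mul_sub_one, show m * (2 * d) = d * (2 * m) by ring,
    show 2 * d * m = d * (2 * m) by ring, Nat.mul_le_mul_left_iff hd, Nat.mul_lt_mul_left hd]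
  omega

lemma filter_Icc_one_sub_one_eq {P : ℤ → Prop} [DecidablePred P] (h0 : ¬ P 0) (n : ℤ) :
    {k ∈ Icc 1 (n - 1) | P k} = {k ∈ Ico 0 n | P k} := by
  ext k
  simp only [mem_filter, mem_Icc, mem_Ico]
  constructor
  · rintro ⟨⟨hk1, hkn⟩, hk⟩
    exact ⟨⟨by omega, by omega⟩, hk⟩
  · rintro ⟨⟨hk0, hkn⟩, hk⟩
    have : k ≠ 0 := by rintro rfl; exact h0 hk
    exact ⟨⟨by omega, by omega⟩, hk⟩

lemma phi_eq_two_mul_iff {n j a b d : ℕ} (hj : j = a * (2 * d)) (hn : n = b * d) {m : ℤ}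
    (hm : 0 ≤ m) (hmn : 2 * d * m < n) (k : ℤ) :
    phi n j k = 2 * d * m ↔ a * k ≡ m [ZMOD b] ∨ a * k ≡ -m [ZMOD b] := by
  have hd : (2 * d : ℤ) ≠ 0 := by
    rintro h
    obtain rfl : d = 0 := by omega
    simp_all
  have hcancel : ∀ c : ℤ, j * k ≡ 2 * d * c [ZMOD 2 * n] ↔ a * k ≡ c [ZMOD b] := fun c => by
    rw [← Int.ModEq.mul_left_cancel_iff' (a := a * k) (b := c) (m := b) hd, hj, hn]
    push_cast
    ring_nf
  rw [phi_eq_iff_modEq (by positivity) hmn, hcancel, ← mul_neg, hcancel]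

lemma card_filter_phi_eq_two_mul {n j a b d : ℕ} (hj : j = a * (2 * d)) (hn : n = b * d)
    (hab : a.Coprime b) {m : ℕ} (hm : 0 < m) (hmn : 2 * d * m < n) :
    #{k ∈ Icc 1 ((n : ℤ) - 1) | phi n j k = 2 * d * m} = 2 * d := by
  have hd : 0 < d := Nat.pos_of_ne_zero (by rintro rfl; simp_all)
  have hmn' : 2 * d * (m : ℤ) < n := by exact_mod_cast hmn
  have hmb : 2 * m < b := by
    rw [hn, show 2 * d * m = 2 * m * d by ring] at hmn
    exact Nat.lt_of_mul_lt_mul_right hmn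
  have hdisj : Disjoint {k ∈ Ico 0 ((d : ℤ) * b) | a * k ≡ m [ZMOD b]}
      {k ∈ Ico 0 ((d : ℤ) * b) | a * k ≡ -m [ZMOD b]} := by
    refine disjoint_filter.mpr fun k _ hpos hneg => ?_
    have hdvd : (b : ℤ) ∣ 2 * m := by
      have h := dvd_neg.mpr (Int.modEq_iff_dvd.mp (hpos.symm.trans hneg))
      rwa [neg_sub, sub_neg_eq_add, ← two_mul] at h
    have := Int.eq_zero_of_dvd_of_nonneg_of_lt (by positivity) (by exact_mod_cast hmb) hdvd
    omega
  have hcop : IsCoprime (a : ℤ) b := Nat.isCoprime_iff_coprime.mpr hab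
  have hnz : (n : ℤ) = d * b := by rw [hn]; push_cast; ring
  have hphi0 : phi n j 0 ≠ 2 * d * m := by rw [phi_zero]; positivity
  rw [filter_Icc_one_sub_one_eq hphi0, hnz,
    filter_congr fun k _ => phi_eq_two_mul_iff hj hn (Nat.cast_nonneg m) hmn' k, filter_or,
    card_union_of_disjoint hdisj, card_filter_mul_modEq hcop (by omega),
    card_filter_mul_modEq hcop (by omega)]
  ring

lemma phi_image_diff {n j a b d : ℕ} (hj : j = a * (2 * d)) (hn : n = b * d) (hab : a.Coprime b) :
    (phi n j '' Set.Icc 1 ((n : ℤ) - 1)) \ {0, (n : ℤ)} =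
      {y | ∃ m : ℕ, 1 ≤ m ∧ 2 * d * m < n ∧ y = 2 * (d : ℤ) * m} := by
  ext y
  simp only [Set.mem_sdiff, Set.mem_image, Set.mem_Icc, Set.mem_insert_iff,
    Set.mem_singleton_iff, not_or, Set.mem_ofPred_eq]
  constructor
  · rintro ⟨⟨k, hk, rfl⟩, hy0, hyn⟩
    have hpos : 0 < phi n j k := lt_of_le_of_ne (abs_nonneg _) (Ne.symm hy0)
    have hlt : phi n j k < n := lt_of_le_of_ne (phi_le (by omega) j k) hyn
    obtain ⟨e, he⟩ : (2 * d : ℤ) ∣ phi n j k :=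
      dvd_phi ⟨a, by rw [hj]; push_cast; ring⟩ ⟨b, by rw [hn]; push_cast; ring⟩ k
    lift e to ℕ using by nlinarith
    refine ⟨e, ?_, ?_, he⟩
    · exact Nat.one_le_iff_ne_zero.mpr (by rintro rfl; simp_all)
    · exact_mod_cast he ▸ hlt
  · rintro ⟨m, hm, hmn, rfl⟩
    have hd : 0 < d := Nat.pos_of_ne_zero (by rintro rfl; simp_all)
    obtain ⟨k, hk⟩ := card_pos.mp <| (card_filter_phi_eq_two_mul hj hn hab hm hmn).symm ▸
      Nat.mul_pos two_pos hd
    rw [mem_filter, mem_Icc] at hk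
    refine ⟨⟨k, hk.1, hk.2⟩, by positivity, ?_⟩
    exact_mod_cast hmn.ne

theorem phi_image_and_card_even_case_general (n j d : ℕ)
    (hgcd2 : Nat.gcd j (2 * n) = 2 * d) :
    (∀ m : ℕ, 1 ≤ m → m ≤ (n - d) / (2 * d) →
      ((Finset.Icc (1 : ℤ) ((n : ℤ) - 1)).filter
        (fun k => phi n j k = 2 * (d : ℤ) * (m : ℤ))).card = 2 * d) ∧
    (phi n j '' Set.Icc (1 : ℤ) ((n : ℤ) - 1)) \ {0, (n : ℤ)} =
      {y : ℤ | ∃ m : ℕ, 1 ≤ m ∧ m ≤ (n - d) / (2 * d) ∧ y = 2 * (d : ℤ) * (m : ℤ)} := by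
  obtain ⟨a, b, hab, hj, h2n⟩ := Nat.exists_coprime j (2 * n)
  rw [hgcd2] at hj h2n
  have hn : n = b * d := by linarith
  have hle (m : ℕ) (hm : 1 ≤ m) : m ≤ (n - d) / (2 * d) ↔ 2 * d * m < n :=
    le_sub_div_two_mul_iff ⟨b, by rw [hn, mul_comm]⟩ hm
  refine ⟨fun m hm hmn => card_filter_phi_eq_two_mul hj hn hab hm ((hle m hm).mp hmn), ?_⟩
  rw [phi_image_diff hj hn hab]
  ext y
  exact exists_congr fun m => and_congr_right fun hm => and_congr_left' (hle m hm).symm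

theorem phi_image_and_card_even_case (n j d : ℕ) (hn : 1 ≤ n) (hj : 1 ≤ j)
    (hgcd : Nat.gcd j n = d) (hgcd2 : Nat.gcd j (2 * n) = 2 * d) (hdn : d < n) :
    (∀ m : ℕ, 1 ≤ m → m ≤ (n - d) / (2 * d) →
      ((Finset.Icc (1 : ℤ) ((n : ℤ) - 1)).filter
        (fun k => phi n j k = 2 * (d : ℤ) * (m : ℤ))).card = 2 * d) ∧
    (phi n j '' Set.Icc (1 : ℤ) ((n : ℤ) - 1)) \ {0, (n : ℤ)} =
      {y : ℤ | ∃ m : ℕ, 1 ≤ m ∧ m ≤ (n - d) / (2 * d) ∧ y = 2 * (d : ℤ) * (m : ℤ)} :=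
  phi_image_and_card_even_case_general n j d hgcd2
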